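/- Let X, D, C be groups and d : X → D, c : X → C group homomorphisms; set A = ker d ∩ ker c. Assume that the commutator subgroup ⁅ker d, ker c⁆ is trivial and that every element of A commutes with every element of X. Then the map w : □(d,c) → A sending (δ, α, γ, β) to δ·α⁻¹·β·γ⁻¹ is a group homomorphism, and w(a, 1, 1, 1) = a for every a ∈ A; that is, w is a retraction of the embedding A → □(d,c), a ↦ (a, 1, 1, 1). -/

import Mathlib

/-- The set of two-fold diamonds `(δ, α, γ, β)` for `d : X → D`, `c : X → C`. -/
def diamondSet {X C D : Type*} [Group X] [Group C] [Group D]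
    (d : X →* D) (c : X →* C) : Set (X × X × X × X) :=
  {q | c q.1 = c q.2.1 ∧ c q.2.2.1 = c q.2.2.2 ∧
       d q.1 = d q.2.2.1 ∧ d q.2.1 = d q.2.2.2}

/-- The word `δ·α⁻¹·β·γ⁻¹` of a diamond `(δ, α, γ, β)`. -/
def phiWord {X : Type*} [Group X] (q : X × X × X × X) : X :=
  q.1 * q.2.1⁻¹ * q.2.2.2 * q.2.2.1⁻¹

/-!
For diamonds `p = (δ, α, γ, β)` and `q = (δ', α', γ', β')` one regroups
`w(p q) = δ · (δ' α'⁻¹)(α⁻¹ β) · (β' γ'⁻¹) · γ⁻¹`. Here `δ' α'⁻¹ ∈ ker c` and `α⁻¹ β ∈ ker d`,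
so the two middle factors commute, giving `δ α⁻¹ β · w(q) · γ⁻¹`; since `w(q) ∈ A` is central,
it moves past `γ⁻¹`, giving `w(p) w(q)`.
-/

section DiamondWord

variable {X C D : Type*} [Group X] [Group C] [Group D]

theorem commute_of_mem_of_commutator_eq_bot {H K : Subgroup X} (hHK : ⁅H, K⁆ = ⊥)
    {g h : X} (hg : g ∈ H) (hh : h ∈ K) : Commute g h :=
  ((Subgroup.commutator_eq_bot_iff_le_centralizer.mp hHK hg) h hh).symm

theorem phiWord_mem_ker_inf {d : X →* D} {c : X →* C} {q : X × X × X × X}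
    (hq : q ∈ diamondSet d c) : phiWord q ∈ d.ker ⊓ c.ker := by
  obtain ⟨hc₁, hc₂, hd₁, hd₂⟩ := hq
  refine Subgroup.mem_inf.mpr ⟨?_, ?_⟩
  · rw [MonoidHom.mem_ker, phiWord, map_mul, map_mul, map_mul, map_inv, map_inv, hd₁, hd₂]
    group
  · rw [MonoidHom.mem_ker, phiWord, map_mul, map_mul, map_mul, map_inv, map_inv, hc₁, hc₂]
    group

theorem phiWord_mul_of_commute {p q : X × X × X × X}
    (hpq : Commute (p.2.1⁻¹ * p.2.2.2) (q.1 * q.2.1⁻¹)) (hq : Commute (phiWord q) p.2.2.1) :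
    phiWord (p * q) = phiWord p * phiWord q := by
  obtain ⟨δ, α, γ, β⟩ := p
  obtain ⟨δ', α', γ', β'⟩ := q
  calc δ * δ' * (α * α')⁻¹ * (β * β') * (γ * γ')⁻¹
      = δ * ((δ' * α'⁻¹) * (α⁻¹ * β)) * (β' * γ'⁻¹) * γ⁻¹ := by group
    _ = δ * α⁻¹ * β * phiWord (δ', α', γ', β') * γ⁻¹ := by
        rw [← hpq.eq]; simp only [phiWord]; group
    _ = δ * α⁻¹ * β * γ⁻¹ * phiWord (δ', α', γ', β') := by
        rw [mul_assoc _ (phiWord _), hq.inv_right.eq, ← mul_assoc]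

end DiamondWord

/-- If `⁅ker d, ker c⁆ = 1` and `⁅A, X⁆ = 1` (where `A = ker d ∩ ker c`), the
word map `w : □(d,c) → A, (δ,α,γ,β) ↦ δ·α⁻¹·β·γ⁻¹` is a group homomorphism and a
retraction of the embedding `a ↦ (a,1,1,1)` of `A` into `□(d,c)`. -/
theorem diamond_word_retraction {X C D : Type*} [Group X] [Group C] [Group D]
    (d : X →* D) (c : X →* C)
    (h1 : ⁅d.ker, c.ker⁆ = (⊥ : Subgroup X))
    (h2 : ∀ a ∈ d.ker ⊓ c.ker, ∀ x : X, a * x = x * a) :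
    (∀ q ∈ diamondSet d c, phiWord q ∈ d.ker ⊓ c.ker) ∧
    (∀ p ∈ diamondSet d c, ∀ q ∈ diamondSet d c,
      phiWord (p * q) = phiWord p * phiWord q) ∧
    (∀ a : X, a ∈ d.ker ⊓ c.ker →
      ((a, 1, 1, 1) : X × X × X × X) ∈ diamondSet d c ∧
      phiWord ((a, 1, 1, 1) : X × X × X × X) = a) := by
  refine ⟨fun q hq ↦ phiWord_mem_ker_inf hq, fun p hp q hq ↦ ?_, fun a ha ↦ ?_⟩
  · have hα_inv_β : p.2.1⁻¹ * p.2.2.2 ∈ d.ker := by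
      rw [MonoidHom.mem_ker, map_mul, map_inv, hp.2.2.2, inv_mul_cancel]
    have hδ_α_inv : q.1 * q.2.1⁻¹ ∈ c.ker := by
      rw [MonoidHom.mem_ker, map_mul, map_inv, hq.1, mul_inv_cancel]
    exact phiWord_mul_of_commute (commute_of_mem_of_commutator_eq_bot h1 hα_inv_β hδ_α_inv)
      (h2 _ (phiWord_mem_ker_inf hq) _)
  · obtain ⟨had, hac⟩ := ha
    exact ⟨⟨by simpa using hac, rfl, by simpa using had, rfl⟩, by simp [phiWord]⟩
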